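/- arXiv:1702.08579 — 2 statements merged into one kernel-verified Lean document; each statement's English description precedes it below -/
import Mathlib

section
/- Let B be the disjoint union of k balanced complete bipartite graphs of orders n₁, …, n_k with n₁ + ⋯ + n_k = n. Then F(B) ≥ l^k · 2^{n − (k/2)·log₂(n/k)}, where l is a positive constant such that C(x,⌊x/2⌋) ≥ l·2^x/√x for all positive integers x. -/
def GDiff {V : Type*} (G : SimpleGraph V) (π σ : Equiv.Perm V) : Prop :=
  ∃ i, G.Adj (π i) (σ i)

noncomputable def famF {V : Type*} (G : SimpleGraph V) : ℕ :=
  sSup {k | ∃ S : Finset (Equiv.Perm V), S.card = k ∧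
    (S : Set (Equiv.Perm V)).Pairwise (GDiff G)}

/-- The disjoint union of `k` balanced complete bipartite graphs, the `i`-th of
order `ns i` (its parts being its first `⌊ns i / 2⌋` vertices and the rest). -/
def Bgraph (k : ℕ) (ns : Fin k → ℕ) : SimpleGraph (Σ i : Fin k, Fin (ns i)) where
  Adj x y := x.1 = y.1 ∧
    (((x.2 : ℕ) < ns x.1 / 2 ∧ ¬ (y.2 : ℕ) < ns y.1 / 2) ∨
      ((y.2 : ℕ) < ns y.1 / 2 ∧ ¬ (x.2 : ℕ) < ns x.1 / 2))
  symm := ⟨fun x y h => ⟨h.1.symm, Or.symm h.2⟩⟩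
  loopless := ⟨fun x h => by rcases h.2 with ⟨h1, h2⟩ | ⟨h1, h2⟩ <;> exact h2 h1⟩

/-!
Choosing, independently in each component `K_{⌊m/2⌋,⌈m/2⌉}`, which `⌊m/2⌋`-subset of its vertices
is sent onto the first part gives `∏ C(nᵢ, ⌊nᵢ/2⌋)` pairwise `B`-different permutations: two
different choices disagree on some vertex, which one permutation sends into the first part and the
other into the second, an edge. The hypothesis on `l` bounds this product below by
`lᵏ 2ⁿ / √(∏ nᵢ)`, and AM-GM gives `∏ nᵢ ≤ (n/k)ᵏ = 2^(k log₂(n/k))`.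
-/

open Finset

theorem Finset.prod_le_mean_pow {ι : Type*} (s : Finset ι) {z : ι → ℝ}
    (hz : ∀ i ∈ s, 0 ≤ z i) : ∏ i ∈ s, z i ≤ ((∑ i ∈ s, z i) / #s) ^ #s := by
  rcases s.eq_empty_or_nonempty with rfl | hs
  · simp
  have hcard : (0 : ℝ) < #s := by exact_mod_cast hs.card_pos
  have amgm := Real.geom_mean_le_arith_mean s (fun _ => 1) z (fun _ _ => zero_le_one)
    (by simpa using hcard) hz
  simp only [Real.rpow_one, sum_const, nsmul_eq_mul, mul_one, one_mul] at amgm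
  calc ∏ i ∈ s, z i = ((∏ i ∈ s, z i) ^ ((#s : ℝ)⁻¹)) ^ #s :=
        (Real.rpow_inv_natCast_pow (prod_nonneg hz) hs.card_pos.ne').symm
    _ ≤ ((∑ i ∈ s, z i) / #s) ^ #s := by gcongr; exact Real.rpow_nonneg (prod_nonneg hz) _

theorem Real.rpow_sub_mul_logb {b q : ℝ} (hb : 0 < b) (hb₁ : b ≠ 1) (hq : 0 < q) (x c : ℝ) :
    b ^ (x - c * Real.logb b q) = b ^ x / q ^ c := by
  rw [Real.rpow_sub hb, mul_comm, Real.rpow_mul hb.le, Real.rpow_logb hb hb₁ hq]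

theorem Real.sqrt_prod_le_mean_rpow {ι : Type*} (s : Finset ι) {z : ι → ℝ}
    (hz : ∀ i ∈ s, 0 ≤ z i) :
    √(∏ i ∈ s, z i) ≤ ((∑ i ∈ s, z i) / #s) ^ ((#s : ℝ) / 2) := by
  have hmean : 0 ≤ (∑ i ∈ s, z i) / #s := div_nonneg (sum_nonneg hz) (Nat.cast_nonneg _)
  calc √(∏ i ∈ s, z i) ≤ √(((∑ i ∈ s, z i) / #s) ^ #s) :=
        Real.sqrt_le_sqrt (s.prod_le_mean_pow hz)
    _ = ((∑ i ∈ s, z i) / #s) ^ ((#s : ℝ) / 2) := by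
        rw [Real.sqrt_eq_rpow, ← Real.rpow_natCast, ← Real.rpow_mul hmean, mul_one_div]

theorem Finset.exists_perm_mem_iff_mem {α : Type*} [Fintype α] [DecidableEq α]
    {s t : Finset α} (hst : #s = #t) : ∃ σ : Equiv.Perm α, ∀ x, σ x ∈ t ↔ x ∈ s := by
  let e : {x // x ∈ s} ≃ {x // x ∈ t} := Fintype.equivOfCardEq (by simpa using hst)
  refine ⟨e.extendSubtype, fun x => ⟨fun h => ?_, e.extendSubtype_mem x⟩⟩
  by_contra hx
  exact e.extendSubtype_not_mem x hx h

theorem GDiff.ne {V : Type*} {G : SimpleGraph V} {π σ : Equiv.Perm V} (h : GDiff G π σ) :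
    π ≠ σ := by
  rintro rfl
  obtain ⟨i, hi⟩ := h
  exact G.loopless.irrefl _ hi

theorem card_le_famF {V ι : Type*} [Fintype V] [DecidableEq V] [Fintype ι]
    {G : SimpleGraph V} (Φ : ι → Equiv.Perm V) (hΦ : ∀ a b, a ≠ b → GDiff G (Φ a) (Φ b)) :
    Fintype.card ι ≤ famF G := by
  classical
  have hinj : Function.Injective Φ := fun a b hab => by
    by_contra hne
    exact (hΦ a b hne).ne hab
  have hbdd : BddAbove {m | ∃ S : Finset (Equiv.Perm V), #S = m ∧
      (S : Set (Equiv.Perm V)).Pairwise (GDiff G)} :=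
    ⟨Fintype.card (Equiv.Perm V), by rintro _ ⟨S, rfl, -⟩; exact S.card_le_univ⟩
  refine le_csSup hbdd ⟨univ.image Φ, by rw [card_image_of_injective _ hinj, card_univ], ?_⟩
  simp only [coe_image, coe_univ, Set.image_univ]
  rintro _ ⟨a, rfl⟩ _ ⟨b, rfl⟩ hne
  exact hΦ a b fun h => hne (congrArg Φ h)

theorem Bgraph_adj_mk {k : ℕ} {ns : Fin k → ℕ} (i : Fin k) (a b : Fin (ns i)) :
    (Bgraph k ns).Adj ⟨i, a⟩ ⟨i, b⟩ ↔ ¬((a : ℕ) < ns i / 2 ↔ (b : ℕ) < ns i / 2) := by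
  simp only [Bgraph, true_and]
  tauto

theorem prod_choose_le_famF_Bgraph (k : ℕ) (ns : Fin k → ℕ) :
    ∏ i, (ns i).choose (ns i / 2) ≤ famF (Bgraph k ns) := by
  have hlow (i : Fin k) : #{j : Fin (ns i) | (j : ℕ) < ns i / 2} = ns i / 2 := by
    rw [Fin.card_filter_val_lt]
    omega
  choose σ hσ using fun i (A : {A : Finset (Fin (ns i)) // #A = ns i / 2}) =>
    exists_perm_mem_iff_mem (A.2.trans (hlow i).symm)
  simp only [mem_filter, mem_univ, true_and] at hσ
  calc ∏ i, (ns i).choose (ns i / 2)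
      = Fintype.card (∀ i, {A : Finset (Fin (ns i)) // #A = ns i / 2}) := by simp
    _ ≤ famF (Bgraph k ns) := card_le_famF (fun f => Equiv.sigmaCongrRight fun i => σ i (f i))
        fun f g hfg => ?_
  obtain ⟨i, hi⟩ := Function.ne_iff.mp hfg
  obtain ⟨j, hj⟩ : ∃ j, ¬(j ∈ (f i).1 ↔ j ∈ (g i).1) := by
    by_contra! h
    exact hi (Subtype.ext (Finset.ext h))
  exact ⟨⟨i, j⟩, (Bgraph_adj_mk _ _ _).mpr (by rwa [hσ, hσ])⟩

theorem stmt10 (k n : ℕ) (hk : 0 < k) (ns : Fin k → ℕ) (hns : ∀ i, 0 < ns i)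
    (hsum : ∑ i, ns i = n)
    (l : ℝ) (hl : 0 < l)
    (hlb : ∀ x : ℕ, 0 < x → l * 2 ^ x / Real.sqrt x ≤ (x.choose (x / 2) : ℝ)) :
    l ^ k * (2 : ℝ) ^ ((n : ℝ) - ((k : ℝ) / 2) * Real.logb 2 ((n : ℝ) / (k : ℝ))) ≤
      (famF (Bgraph k ns) : ℝ) := by
  have : NeZero k := ⟨hk.ne'⟩
  have hsumR : ∑ i, (ns i : ℝ) = n := by exact_mod_cast hsum
  have hnk : (0 : ℝ) < n / k := by
    rw [← hsumR]
    exact div_pos (sum_pos (fun i _ => by exact_mod_cast hns i) univ_nonempty)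
      (by exact_mod_cast hk)
  have hprod : 0 < √(∏ i, (ns i : ℝ)) :=
    Real.sqrt_pos.mpr (prod_pos fun i _ => by exact_mod_cast hns i)
  have amgm := Real.sqrt_prod_le_mean_rpow univ (z := fun i => (ns i : ℝ))
    fun _ _ => by positivity
  rw [hsumR, card_univ, Fintype.card_fin] at amgm
  calc l ^ k * (2 : ℝ) ^ ((n : ℝ) - ((k : ℝ) / 2) * Real.logb 2 ((n : ℝ) / (k : ℝ)))
      = l ^ k * 2 ^ n / ((n : ℝ) / k) ^ ((k : ℝ) / 2) := by
        rw [Real.rpow_sub_mul_logb two_pos (by norm_num) hnk, Real.rpow_natCast, mul_div_assoc]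
    _ ≤ l ^ k * 2 ^ n / √(∏ i, (ns i : ℝ)) := by gcongr
    _ = ∏ i, (l * 2 ^ ns i / √(ns i)) := by
        rw [Real.sqrt_prod _ fun _ _ => by positivity, prod_div_distrib, prod_mul_distrib,
          prod_const, prod_pow_eq_pow_sum, hsum, card_univ, Fintype.card_fin]
    _ ≤ ∏ i, ((ns i).choose (ns i / 2) : ℝ) :=
        prod_le_prod (fun i _ => by positivity) fun i _ => hlb _ (hns i)
    _ ≤ famF (Bgraph k ns) := by exact_mod_cast prod_choose_le_famF_Bgraph k ns
end

section
/- For even n ≥ 2, F_∞(M(n)) ≥ 3^{n/2}: there exists a family of 3^{n/2} pairwise M(n)-different permutations of the vertices of the perfect matching M(n) with blank spaces. -/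
/-!
`M(n)` for `n = 2m` is the disjoint union of `m` copies of `M(2)`, and `M(2)` admits the three
pairwise different cyclic shifts of `(1, 2, *)`. Concatenating one shift per edge gives `3^m`
permutations with blanks; two of them that choose different shifts on the `k`-th edge are already
`M(n)`-different inside the `k`-th block.
-/

/-- The perfect matching `M(n)` on vertices `Fin n` with edges
`(0,1), (2,3), …` (standing for `(1,2), (3,4), …`). -/
def MatchG (n : ℕ) : SimpleGraph (Fin n) where
  Adj u v := (u : ℕ) / 2 = (v : ℕ) / 2 ∧ u ≠ v
  symm := ⟨fun _ _ h => ⟨h.1.symm, h.2.symm⟩⟩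
  loopless := ⟨fun _ h => h.2 rfl⟩

def validPerm {n c : ℕ} (f : Fin c → Option (Fin n)) : Prop :=
  ∀ v : Fin n, ∃! i, f i = some v

def mDiff {n c : ℕ} (f g : Fin c → Option (Fin n)) : Prop :=
  ∃ i v w, f i = some v ∧ g i = some w ∧ (MatchG n).Adj v w

lemma not_mDiff_self {n c : ℕ} (f : Fin c → Option (Fin n)) : ¬ mDiff f f := by
  rintro ⟨i, v, w, hv, hw, hadj⟩
  rw [hv, Option.some_inj] at hw
  exact (MatchG n).loopless.irrefl v (hw ▸ hadj)

lemma exists_finset_of_pairwise_mDiff {n c : ℕ} {ι : Type*} [Fintype ι]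
    (g : ι → Fin c → Option (Fin n)) (hvalid : ∀ i, validPerm (g i))
    (hdiff : Pairwise fun i j => mDiff (g i) (g j)) :
    ∃ S : Finset (Fin c → Option (Fin n)), (∀ f ∈ S, validPerm f) ∧
      (S : Set (Fin c → Option (Fin n))).Pairwise mDiff ∧ S.card = Fintype.card ι := by
  have hinj : Function.Injective g := fun i j hij => by
    by_contra hne
    have h : mDiff (g i) (g j) := hdiff hne
    rw [hij] at h
    exact not_mDiff_self (g j) h
  refine ⟨Finset.univ.map ⟨g, hinj⟩, ?_, ?_, by simp⟩
  · simp [hvalid]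
  · rintro _ hf _ hg hfg
    simp only [Finset.coe_map, Set.mem_image, Finset.coe_univ, Set.mem_univ, true_and] at hf hg
    obtain ⟨i, rfl⟩ := hf
    obtain ⟨j, rfl⟩ := hg
    exact hdiff fun hij => hfg (hij ▸ rfl)

/-- The three cyclic shifts of the word `(1, 2, *)`. -/
def cyclicShift (j : Fin 3) (r : Fin 3) : Option (Fin 2) :=
  ![some 0, some 1, none] (r - j)

lemma cyclicShift_eq_some_iff {j r : Fin 3} {s : Fin 2} :
    cyclicShift j r = some s ↔ r = j + s.castSucc := by
  revert j r s
  unfold cyclicShift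
  decide

lemma validPerm_cyclicShift (j : Fin 3) : validPerm (cyclicShift j) := fun s =>
  ⟨j + s.castSucc, cyclicShift_eq_some_iff.2 rfl, fun _ => cyclicShift_eq_some_iff.1⟩

lemma pairwise_mDiff_cyclicShift :
    Pairwise fun j j' => mDiff (cyclicShift j) (cyclicShift j') := by
  unfold Pairwise mDiff cyclicShift MatchG
  decide

section Concat

variable {m c : ℕ}

/-- Concatenation along `m` disjoint copies of `M(2)`: `finProdFinEquiv` encodes position `r` of
block `k` as `r + c k` and vertex `s` of the `k`-th edge as `s + 2 k`. -/
def concat (F : Fin m → Fin c → Option (Fin 2)) (i : Fin (m * c)) : Option (Fin (m * 2)) :=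
  (F (finProdFinEquiv.symm i).1 (finProdFinEquiv.symm i).2).map
    fun s => finProdFinEquiv ((finProdFinEquiv.symm i).1, s)

lemma concat_finProdFinEquiv_eq_some {F : Fin m → Fin c → Option (Fin 2)} {k k' : Fin m}
    {r : Fin c} {s : Fin 2} :
    concat F (finProdFinEquiv (k, r)) = some (finProdFinEquiv (k', s)) ↔
      k = k' ∧ F k r = some s := by
  simp only [concat, Equiv.symm_apply_apply, Option.map_eq_some_iff,
    EmbeddingLike.apply_eq_iff_eq, Prod.mk.injEq]
  constructor
  · rintro ⟨s, h, rfl, rfl⟩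
    exact ⟨rfl, h⟩
  · rintro ⟨rfl, h⟩
    exact ⟨s, h, rfl, rfl⟩

lemma matchG_adj_finProdFinEquiv {k k' : Fin m} {s s' : Fin 2} :
    (MatchG (m * 2)).Adj (finProdFinEquiv (k, s)) (finProdFinEquiv (k', s')) ↔
      k = k' ∧ (MatchG 2).Adj s s' := by
  have := s.isLt
  have := s'.isLt
  simp only [MatchG, ne_eq, Fin.ext_iff, finProdFinEquiv_apply_val]
  omega

lemma validPerm_concat {F : Fin m → Fin c → Option (Fin 2)} (hF : ∀ k, validPerm (F k)) :
    validPerm (concat F) := by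
  intro v
  obtain ⟨⟨k, s⟩, rfl⟩ := finProdFinEquiv.surjective v
  obtain ⟨r, hr, hr_unique⟩ := hF k s
  refine ⟨finProdFinEquiv (k, r), concat_finProdFinEquiv_eq_some.2 ⟨rfl, hr⟩, fun i hi => ?_⟩
  obtain ⟨⟨k', r'⟩, rfl⟩ := finProdFinEquiv.surjective i
  obtain ⟨rfl, h⟩ := concat_finProdFinEquiv_eq_some.1 hi
  rw [hr_unique r' h]

lemma mDiff_concat {F G : Fin m → Fin c → Option (Fin 2)} {k : Fin m}
    (h : mDiff (F k) (G k)) : mDiff (concat F) (concat G) := by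
  obtain ⟨r, s, s', hs, hs', hadj⟩ := h
  exact ⟨finProdFinEquiv (k, r), finProdFinEquiv (k, s), finProdFinEquiv (k, s'),
    concat_finProdFinEquiv_eq_some.2 ⟨rfl, hs⟩, concat_finProdFinEquiv_eq_some.2 ⟨rfl, hs'⟩,
    matchG_adj_finProdFinEquiv.2 ⟨rfl, hadj⟩⟩

lemma pairwise_mDiff_concat_comp {ι : Type*} {g : ι → Fin c → Option (Fin 2)}
    (hg : Pairwise fun i j => mDiff (g i) (g j)) :
    Pairwise fun a b : Fin m → ι => mDiff (concat (g ∘ a)) (concat (g ∘ b)) := fun a b hab => by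
  obtain ⟨k, hk⟩ := Function.ne_iff.1 hab
  exact mDiff_concat (hg hk)

end Concat

theorem stmt19_general (n : ℕ) (hn : Even n) :
    ∃ (c : ℕ) (S : Finset (Fin c → Option (Fin n))),
      (∀ f ∈ S, validPerm f) ∧
      (S : Set (Fin c → Option (Fin n))).Pairwise mDiff ∧
      S.card = 3 ^ (n / 2) := by
  obtain ⟨m, rfl⟩ : ∃ m, n = m * 2 := ⟨n / 2, by rw [Nat.even_iff] at hn; omega⟩
  obtain ⟨S, hvalid, hdiff, hcard⟩ := exists_finset_of_pairwise_mDiff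
    (fun a : Fin m → Fin 3 => concat (cyclicShift ∘ a))
    (fun a => validPerm_concat fun k => validPerm_cyclicShift (a k))
    (pairwise_mDiff_concat_comp pairwise_mDiff_cyclicShift)
  refine ⟨m * 3, S, hvalid, hdiff, ?_⟩
  rw [hcard, Fintype.card_fun, Fintype.card_fin, Fintype.card_fin, Nat.mul_div_cancel m two_pos]

/-- `F_∞(M(n)) ≥ 3^{n/2}`: there is a family of `3^{n/2}` pairwise
`M(n)`-different permutations of the vertices of `M(n)` with blank spaces. -/
theorem stmt19 (n : ℕ) (hn : Even n) (h2 : 2 ≤ n) :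
    ∃ (c : ℕ) (S : Finset (Fin c → Option (Fin n))),
      (∀ f ∈ S, validPerm f) ∧
      (S : Set (Fin c → Option (Fin n))).Pairwise mDiff ∧
      S.card = 3 ^ (n / 2) :=
  stmt19_general n hn
end
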